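/- arXiv:2605.18247 — 2 statements merged into one kernel-verified Lean document; each statement's English description precedes it below -/
import Mathlib

section
/- Let Ω ⊆ ℝ³ be open, let ρ, η, φ : Ω → ℝ be smooth with ρ > 0 and sin η ≠ 0 on Ω, and define s = (sin η cos φ, sin η sin φ, cos η), s_η = (cos η cos φ, cos η sin φ, −sin η), s_φ = (−sin φ, cos φ, 0). Then the pointwise identity (1/ρ)·Σᵢ ∂ᵢ(ρ·∂ᵢs) = [(1/ρ)·∇·(ρ∇η) − sin η·cos η·|∇φ|²]·s_η + [(1/(ρ·sin η))·∇·(ρ·sin²η·∇φ)]·s_φ − (|∇η|² + sin²η·|∇φ|²)·s holds on Ω. -/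
/-! Splitting `∇·(ρ∇f) = ∇ρ·∇f + ρΔf` turns the product and chain rules for `Δ` into the same
rules for `∇·(ρ∇ ·)`. As the components of `s` are `sin η cos φ`, `sin η sin φ` and `cos η`,
these rules express `∇·(ρ∇sₖ)` through `∇·(ρ∇η)`, `∇·(ρ∇φ)`, `|∇η|²`, `|∇φ|²` and `∇η·∇φ`;
they also give `∇·(ρ sin²η ∇φ) = sin η (sin η ∇·(ρ∇φ) + 2ρ cos η ∇η·∇φ)`, and what is left is
a trigonometric identity modulo `sin²η + cos²η = 1`. -/

open Real

noncomputable section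

/-- Partial derivative of a scalar function on ℝ³ in the `i`-th coordinate direction. -/
noncomputable def pd (i : Fin 3) (f : (Fin 3 → ℝ) → ℝ) (x : Fin 3 → ℝ) : ℝ :=
  fderiv ℝ f x (Pi.single i 1)

/-- Divergence of a vector field on ℝ³. -/
noncomputable def div3 (v : (Fin 3 → ℝ) → (Fin 3 → ℝ)) (x : Fin 3 → ℝ) : ℝ :=
  ∑ i, pd i (fun y => v y i) x

def gradInner (f g : (Fin 3 → ℝ) → ℝ) (x : Fin 3 → ℝ) : ℝ :=
  ∑ i, pd i f x * pd i g x

def laplacian3 (f : (Fin 3 → ℝ) → ℝ) (x : Fin 3 → ℝ) : ℝ :=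
  ∑ i, pd i (pd i f) x

def weightedLaplacian (ρ f : (Fin 3 → ℝ) → ℝ) (x : Fin 3 → ℝ) : ℝ :=
  div3 (fun y l => ρ y * pd l f y) x

section VectorCalculus

variable {f g ρ σ : (Fin 3 → ℝ) → ℝ} {x : Fin 3 → ℝ} {i : Fin 3}

lemma pd_add (hf : DifferentiableAt ℝ f x) (hg : DifferentiableAt ℝ g x) :
    pd i (fun y => f y + g y) x = pd i f x + pd i g x := by
  simp [pd, fderiv_fun_add hf hg]

lemma pd_mul (hf : DifferentiableAt ℝ f x) (hg : DifferentiableAt ℝ g x) :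
    pd i (fun y => f y * g y) x = pd i f x * g x + f x * pd i g x := by
  simp only [pd, fderiv_fun_mul hf hg, add_apply, smul_apply, smul_eq_mul]
  ring

lemma pd_comp {h : ℝ → ℝ} {h' : ℝ} (hh : HasDerivAt h h' (f x)) (hf : DifferentiableAt ℝ f x) :
    pd i (fun y => h (f y)) x = h' * pd i f x := by
  simp [pd, ← Function.comp_def, (hh.comp_hasFDerivAt x hf.hasFDerivAt).fderiv]

lemma pd_congr (h : f =ᶠ[nhds x] g) : pd i f x = pd i g x := by
  rw [pd, pd, h.fderiv_eq]

lemma ContDiffAt.differentiableAt_pd (hf : ContDiffAt ℝ 2 f x) :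
    DifferentiableAt ℝ (pd i f) x :=
  ((hf.fderiv_right (m := 1) le_rfl).clm_apply contDiffAt_const).differentiableAt one_ne_zero

lemma ContDiffAt.eventually_pd_mul (hf : ContDiffAt ℝ 2 f x) (hg : ContDiffAt ℝ 2 g x) :
    pd i (fun y => f y * g y) =ᶠ[nhds x] fun y => pd i f y * g y + f y * pd i g y := by
  filter_upwards [hf.eventually (by simp), hg.eventually (by simp)] with y hfy hgy
  exact pd_mul (hfy.differentiableAt two_ne_zero) (hgy.differentiableAt two_ne_zero)

lemma ContDiffAt.eventually_pd_comp {h : ℝ → ℝ} (hh : ContDiff ℝ 2 h) (hf : ContDiffAt ℝ 2 f x) :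
    pd i (fun y => h (f y)) =ᶠ[nhds x] fun y => deriv h (f y) * pd i f y := by
  filter_upwards [hf.eventually (by simp)] with y hfy
  exact pd_comp ((hh.differentiable two_ne_zero _).hasDerivAt) (hfy.differentiableAt two_ne_zero)

lemma gradInner_comm : gradInner f g x = gradInner g f x := by
  simp only [gradInner, mul_comm]

lemma gradInner_mul_left (hf : DifferentiableAt ℝ f x) (hg : DifferentiableAt ℝ g x) :
    gradInner (fun y => f y * g y) ρ x = g x * gradInner f ρ x + f x * gradInner g ρ x := by
  simp only [gradInner, pd_mul hf hg, Finset.mul_sum, ← Finset.sum_add_distrib]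
  exact Finset.sum_congr rfl fun i _ => by ring

lemma gradInner_mul_right (hf : DifferentiableAt ℝ f x) (hg : DifferentiableAt ℝ g x) :
    gradInner ρ (fun y => f y * g y) x = g x * gradInner ρ f x + f x * gradInner ρ g x := by
  rw [gradInner_comm, gradInner_mul_left hf hg, gradInner_comm (f := f), gradInner_comm (f := g)]

lemma gradInner_comp_left {h : ℝ → ℝ} {h' : ℝ} (hh : HasDerivAt h h' (f x))
    (hf : DifferentiableAt ℝ f x) : gradInner (fun y => h (f y)) g x = h' * gradInner f g x := by
  simp only [gradInner, pd_comp hh hf, Finset.mul_sum, mul_assoc]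

lemma gradInner_comp_right {h : ℝ → ℝ} {h' : ℝ} (hh : HasDerivAt h h' (g x))
    (hg : DifferentiableAt ℝ g x) : gradInner f (fun y => h (g y)) x = h' * gradInner f g x := by
  rw [gradInner_comm, gradInner_comp_left hh hg, gradInner_comm]

lemma laplacian3_mul (hf : ContDiffAt ℝ 2 f x) (hg : ContDiffAt ℝ 2 g x) :
    laplacian3 (fun y => f y * g y) x
      = g x * laplacian3 f x + f x * laplacian3 g x + 2 * gradInner f g x := by
  have hf₁ := hf.differentiableAt two_ne_zero
  have hg₁ := hg.differentiableAt two_ne_zero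
  simp only [laplacian3, gradInner, Finset.mul_sum, ← Finset.sum_add_distrib]
  refine Finset.sum_congr rfl fun i _ => ?_
  rw [pd_congr (hf.eventually_pd_mul hg), pd_add (hf.differentiableAt_pd.fun_mul hg₁)
    (hf₁.fun_mul hg.differentiableAt_pd), pd_mul hf.differentiableAt_pd hg₁,
    pd_mul hf₁ hg.differentiableAt_pd]
  ring

lemma laplacian3_comp {h : ℝ → ℝ} (hh : ContDiff ℝ 2 h) (hf : ContDiffAt ℝ 2 f x) :
    laplacian3 (fun y => h (f y)) x
      = deriv h (f x) * laplacian3 f x + deriv (deriv h) (f x) * gradInner f f x := by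
  have hh' : Differentiable ℝ (deriv h) := (hh.deriv' (n := 1)).differentiable one_ne_zero
  have hf₁ := hf.differentiableAt two_ne_zero
  simp only [laplacian3, gradInner, Finset.mul_sum, ← Finset.sum_add_distrib]
  refine Finset.sum_congr rfl fun i _ => ?_
  rw [pd_congr (hf.eventually_pd_comp hh),
    pd_mul (f := fun y => deriv h (f y)) ((hh' _).comp x hf₁) hf.differentiableAt_pd,
    pd_comp (hh' _).hasDerivAt hf₁]
  ring

lemma weightedLaplacian_eq (hρ : DifferentiableAt ℝ ρ x) (hf : ContDiffAt ℝ 2 f x) :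
    weightedLaplacian ρ f x = gradInner ρ f x + ρ x * laplacian3 f x := by
  simp only [weightedLaplacian, div3, gradInner, laplacian3, Finset.mul_sum,
    ← Finset.sum_add_distrib]
  exact Finset.sum_congr rfl fun i _ => pd_mul hρ hf.differentiableAt_pd

lemma sum_pd_mul_pd_eq_weightedLaplacian :
    ∑ i, pd i (fun y => ρ y * pd i f y) x = weightedLaplacian ρ f x := rfl

lemma div3_mul_pd_eq_weightedLaplacian :
    div3 (fun y l => ρ y * pd l f y) x = weightedLaplacian ρ f x := rfl

lemma sum_pd_sq_eq_gradInner : ∑ i, pd i f x ^ 2 = gradInner f f x := by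
  simp only [gradInner, sq]

lemma weightedLaplacian_mul (hρ : DifferentiableAt ℝ ρ x) (hf : ContDiffAt ℝ 2 f x)
    (hg : ContDiffAt ℝ 2 g x) :
    weightedLaplacian ρ (fun y => f y * g y) x
      = g x * weightedLaplacian ρ f x + f x * weightedLaplacian ρ g x
        + 2 * ρ x * gradInner f g x := by
  rw [weightedLaplacian_eq hρ (hf.mul hg), weightedLaplacian_eq hρ hf, weightedLaplacian_eq hρ hg,
    gradInner_mul_right (hf.differentiableAt two_ne_zero) (hg.differentiableAt two_ne_zero),
    laplacian3_mul hf hg]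
  ring

lemma weightedLaplacian_comp {h : ℝ → ℝ} (hh : ContDiff ℝ 2 h) (hρ : DifferentiableAt ℝ ρ x)
    (hf : ContDiffAt ℝ 2 f x) :
    weightedLaplacian ρ (fun y => h (f y)) x
      = deriv h (f x) * weightedLaplacian ρ f x
        + ρ x * deriv (deriv h) (f x) * gradInner f f x := by
  rw [weightedLaplacian_eq (f := fun y => h (f y)) hρ (hh.contDiffAt.comp x hf),
    weightedLaplacian_eq hρ hf,
    gradInner_comp_right ((hh.differentiable two_ne_zero _).hasDerivAt)
      (hf.differentiableAt two_ne_zero), laplacian3_comp hh hf]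
  ring

lemma weightedLaplacian_weight_mul (hρ : DifferentiableAt ℝ ρ x) (hσ : DifferentiableAt ℝ σ x)
    (hf : ContDiffAt ℝ 2 f x) :
    weightedLaplacian (fun y => ρ y * σ y) f x
      = σ x * weightedLaplacian ρ f x + ρ x * gradInner σ f x := by
  rw [weightedLaplacian_eq (hρ.fun_mul hσ) hf, weightedLaplacian_eq hρ hf,
    gradInner_mul_left hρ hσ]
  ring

lemma weightedLaplacian_comp_mul_comp {a b : ℝ → ℝ} {η φ : (Fin 3 → ℝ) → ℝ}
    (ha : ContDiff ℝ 2 a) (hb : ContDiff ℝ 2 b) (hρ : DifferentiableAt ℝ ρ x)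
    (hη : ContDiffAt ℝ 2 η x) (hφ : ContDiffAt ℝ 2 φ x) :
    weightedLaplacian ρ (fun y => a (η y) * b (φ y)) x
      = b (φ x) * (deriv a (η x) * weightedLaplacian ρ η x
          + ρ x * deriv (deriv a) (η x) * gradInner η η x)
        + a (η x) * (deriv b (φ x) * weightedLaplacian ρ φ x
          + ρ x * deriv (deriv b) (φ x) * gradInner φ φ x)
        + 2 * ρ x * deriv a (η x) * deriv b (φ x) * gradInner η φ x := by
  rw [weightedLaplacian_mul (f := fun y => a (η y)) (g := fun y => b (φ y)) hρ
      (ha.contDiffAt.comp x hη) (hb.contDiffAt.comp x hφ),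
    weightedLaplacian_comp ha hρ hη, weightedLaplacian_comp hb hρ hφ,
    gradInner_comp_left ((ha.differentiable two_ne_zero _).hasDerivAt)
      (hη.differentiableAt two_ne_zero),
    gradInner_comp_right ((hb.differentiable two_ne_zero _).hasDerivAt)
      (hφ.differentiableAt two_ne_zero)]
  ring

lemma weightedLaplacian_mul_sin_sq {η φ : (Fin 3 → ℝ) → ℝ} (hρ : DifferentiableAt ℝ ρ x)
    (hη : DifferentiableAt ℝ η x) (hφ : ContDiffAt ℝ 2 φ x) :
    weightedLaplacian (fun y => ρ y * Real.sin (η y) ^ 2) φ x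
      = Real.sin (η x) * (Real.sin (η x) * weightedLaplacian ρ φ x
        + 2 * ρ x * Real.cos (η x) * gradInner η φ x) := by
  rw [weightedLaplacian_weight_mul hρ (hη.sin.fun_pow 2) hφ,
    gradInner_comp_left ((Real.hasDerivAt_sin _).fun_pow 2) hη]
  ring

end VectorCalculus

/-- **Frame decomposition of the density-weighted Laplacian of the spin field.**
With `s = (sin η cos φ, sin η sin φ, cos η)` and the frame vectors `s_η`, `s_φ`:
`(1/ρ) Σᵢ ∂ᵢ(ρ ∂ᵢs) = [(1/ρ)∇·(ρ∇η) - sin η cos η |∇φ|²] s_η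
+ [(1/(ρ sin η)) ∇·(ρ sin²η ∇φ)] s_φ - (|∇η|² + sin²η |∇φ|²) s`. -/
theorem weighted_laplacian_frame_decomposition
    (Ω : Set (Fin 3 → ℝ)) (hΩ : IsOpen Ω)
    (ρ η φ : (Fin 3 → ℝ) → ℝ)
    (hρ : ContDiffOn ℝ (⊤ : ℕ∞) ρ Ω) (hρpos : ∀ x ∈ Ω, 0 < ρ x)
    (hη : ContDiffOn ℝ (⊤ : ℕ∞) η Ω) (hφ : ContDiffOn ℝ (⊤ : ℕ∞) φ Ω)
    (hsin : ∀ x ∈ Ω, Real.sin (η x) ≠ 0)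
    (s sη sφ : (Fin 3 → ℝ) → Fin 3 → ℝ)
    (hs : s = fun y =>
      ![Real.sin (η y) * Real.cos (φ y), Real.sin (η y) * Real.sin (φ y), Real.cos (η y)])
    (hsη : sη = fun y =>
      ![Real.cos (η y) * Real.cos (φ y), Real.cos (η y) * Real.sin (φ y), -Real.sin (η y)])
    (hsφ : sφ = fun y => ![-Real.sin (φ y), Real.cos (φ y), 0]) :
    ∀ x ∈ Ω, ∀ k,
      (1 / ρ x) * (∑ i, pd i (fun y => ρ y * pd i (fun z => s z k) y) x)
        = ((1 / ρ x) * div3 (fun y l => ρ y * pd l η y) x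
            - Real.sin (η x) * Real.cos (η x) * ∑ i, (pd i φ x) ^ 2) * sη x k
          + (1 / (ρ x * Real.sin (η x)))
              * div3 (fun y l => ρ y * Real.sin (η y) ^ 2 * pd l φ y) x * sφ x k
          - ((∑ i, (pd i η x) ^ 2)
              + Real.sin (η x) ^ 2 * ∑ i, (pd i φ x) ^ 2) * s x k := by
  intro x hx k
  have hρx : DifferentiableAt ℝ ρ x :=
    (hρ.contDiffAt (hΩ.mem_nhds hx)).differentiableAt (by simp)
  have hηx : ContDiffAt ℝ 2 η x := (hη.contDiffAt (hΩ.mem_nhds hx)).of_le (by norm_cast)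
  have hφx : ContDiffAt ℝ 2 φ x := (hφ.contDiffAt (hΩ.mem_nhds hx)).of_le (by norm_cast)
  have hρ0 := (hρpos x hx).ne'
  have hsin0 := hsin x hx
  rw [sum_pd_mul_pd_eq_weightedLaplacian, div3_mul_pd_eq_weightedLaplacian,
    div3_mul_pd_eq_weightedLaplacian, weightedLaplacian_mul_sin_sq hρx
      (hηx.differentiableAt two_ne_zero) hφx, sum_pd_sq_eq_gradInner, sum_pd_sq_eq_gradInner]
  fin_cases k <;> simp only [hs, hsη, hsφ, Fin.zero_eta, Fin.mk_one, Fin.reduceFinMk,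
    Matrix.cons_val_zero, Matrix.cons_val_one, Matrix.cons_val]
  · rw [weightedLaplacian_comp_mul_comp Real.contDiff_sin Real.contDiff_cos hρx hηx hφx]
    simp only [Real.deriv_sin, Real.deriv_cos', deriv.fun_neg']
    field_simp
    linear_combination
      (Real.cos (φ x) * Real.sin (η x) * ρ x * gradInner φ φ x) * Real.sin_sq_add_cos_sq (η x)
  · rw [weightedLaplacian_comp_mul_comp Real.contDiff_sin Real.contDiff_sin hρx hηx hφx]
    simp only [Real.deriv_sin, Real.deriv_cos']
    field_simp
    linear_combination
      (Real.sin (φ x) * Real.sin (η x) * ρ x * gradInner φ φ x) * Real.sin_sq_add_cos_sq (η x)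
  · rw [weightedLaplacian_comp Real.contDiff_cos hρx hηx]
    simp only [Real.deriv_sin, Real.deriv_cos', deriv.fun_neg']
    field_simp
    ring

end
end

section
/- Let Ω ⊆ ℝ³ be open, let ρ₁, ρ₂, θ₁, θ₂ : Ω × ℝ → ℝ be smooth with ρ₁, ρ₂ > 0, let A : Ω × ℝ → ℝ³ and Φ, B¹, B², B³ : Ω × ℝ → ℝ be smooth, and let m, ħ, q be constants with m, ħ > 0. Set φ = (θ₂ − θ₁)/ħ, ρ = ρ₁ + ρ₂, u = (ρ₁∇θ₁ + ρ₂∇θ₂)/(mρ) − (q/m)A, V_{qi} = −(ħ²/2m)·Δ√ρᵢ/√ρᵢ, and let η : Ω × ℝ → (0, π) satisfy ρ₁ = ρ·cos²(η/2), ρ₂ = ρ·sin²(η/2). Assume the phase equations ∂ₜθ₁ = −V_{q1} − (1/2m)|∇θ₁ − qA|² − qΦ + (qħ/2m)·[B³ + √(ρ₂/ρ₁)(B¹ cos φ + B² sin φ)] and ∂ₜθ₂ = −V_{q2} − (1/2m)|∇θ₂ − qA|² − qΦ + (qħ/2m)·[−B³ + √(ρ₁/ρ₂)(B¹ cos φ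 + B² sin φ)]. Then ∂ₜφ + u·∇φ = (ħ/(2mρ·sin η))·∇·(ρ∇η) − (ħ/2m)·cos η·|∇φ|² + (q/m)·[−B³ + cot η·(B¹ cos φ + B² sin φ)]. -/
open Real

noncomputable section

/-- Space-time point: a point of ℝ³ together with a time. -/
abbrev P3 := (Fin 3 → ℝ) × ℝ

/-- Spatial partial derivative in the `i`-th coordinate direction. -/
noncomputable def pdx (i : Fin 3) (f : P3 → ℝ) (p : P3) : ℝ :=
  fderiv ℝ (fun x => f (x, p.2)) p.1 (Pi.single i 1)

/-- Time derivative. -/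
noncomputable def pdt (f : P3 → ℝ) (p : P3) : ℝ :=
  deriv (fun t => f (p.1, t)) p.2

/-- Spatial divergence of a time-dependent vector field. -/
noncomputable def divx (v : P3 → Fin 3 → ℝ) (p : P3) : ℝ :=
  ∑ i, pdx i (fun y => v y i) p

/-- Spatial Laplacian of a time-dependent scalar field. -/
noncomputable def lapx (f : P3 → ℝ) (p : P3) : ℝ :=
  ∑ i, pdx i (fun y => pdx i f y) p

/-!
Subtracting the two phase equations gives `∂ₜφ`. Writing `Rᵢ = √ρᵢ`, the half-angle relations say
`(R₁, R₂) = √ρ (cos (η/2), sin (η/2))`, i.e. `η/2` is the polar angle of `(R₁, R₂)`; hence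
`ρ ∇η = 2 (R₁ ∇R₂ - R₂ ∇R₁)` and `∇·(ρ ∇η) = 2 (R₁ ΔR₂ - R₂ ΔR₁)`, which turns the difference of
the quantum potentials into the `η`-term. Everything else is pointwise algebra: `ρ cos η = ρ₁ - ρ₂`
and `ρ sin η = 2 R₁ R₂` produce `cot η` in the magnetic terms, and `u·∇φ` absorbs the difference of
the kinetic energies up to `-(ħ/2m) cos η |∇φ|²`.
-/

section SpatialCalculus

variable {f g : P3 → ℝ} {p : P3}

theorem hasFDerivAt_slice (hf : DifferentiableAt ℝ f p) :
    HasFDerivAt (fun x => f (x, p.2))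
      ((fderiv ℝ f p).comp (ContinuousLinearMap.inl ℝ (Fin 3 → ℝ) ℝ)) p.1 :=
  hf.hasFDerivAt.comp p.1 (hasFDerivAt_prodMk_left p.1 p.2)

theorem differentiableAt_slice (hf : DifferentiableAt ℝ f p) :
    DifferentiableAt ℝ (fun x => f (x, p.2)) p.1 :=
  (hasFDerivAt_slice hf).differentiableAt

theorem differentiableAt_timeSlice (hf : DifferentiableAt ℝ f p) :
    DifferentiableAt ℝ (fun t => f (p.1, t)) p.2 :=
  (hf.hasFDerivAt.comp p.2 (hasFDerivAt_prodMk_right p.1 p.2)).differentiableAt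

theorem pdx_eq_fderiv (hf : DifferentiableAt ℝ f p) (i : Fin 3) :
    pdx i f p = fderiv ℝ f p (Pi.single i 1, 0) := by
  rw [pdx, (hasFDerivAt_slice hf).fderiv]
  rfl

theorem pdx_congr {S : Set P3} (hS : IsOpen S) (hfg : Set.EqOn f g S) (hp : p ∈ S) (i : Fin 3) :
    pdx i f p = pdx i g p := by
  have hslice : {x | (x, p.2) ∈ S} ∈ nhds p.1 :=
    (hS.preimage (by fun_prop)).mem_nhds hp
  simp only [pdx, Filter.EventuallyEq.fderiv_eq (Filter.mem_of_superset hslice fun x hx => hfg hx)]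

theorem pdx_sub (hf : DifferentiableAt ℝ f p) (hg : DifferentiableAt ℝ g p) (i : Fin 3) :
    pdx i (fun y => f y - g y) p = pdx i f p - pdx i g p := by
  simp only [pdx]
  rw [fderiv_fun_sub (differentiableAt_slice hf) (differentiableAt_slice hg)]
  rfl

theorem pdx_const_mul (c : ℝ) (hf : DifferentiableAt ℝ f p) (i : Fin 3) :
    pdx i (fun y => c * f y) p = c * pdx i f p := by
  simp only [pdx]
  rw [fderiv_const_mul (differentiableAt_slice hf)]
  rfl

theorem pdx_div_const (hf : DifferentiableAt ℝ f p) (c : ℝ) (i : Fin 3) :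
    pdx i (fun y => f y / c) p = pdx i f p / c := by
  simp_rw [div_eq_inv_mul]
  exact pdx_const_mul c⁻¹ hf i

theorem pdx_sub_div (hf : DifferentiableAt ℝ f p) (hg : DifferentiableAt ℝ g p) (c : ℝ)
    (i : Fin 3) : pdx i (fun y => (f y - g y) / c) p = (pdx i f p - pdx i g p) / c := by
  rw [pdx_div_const (hf.fun_sub hg), pdx_sub hf hg]

theorem pdx_mul (hf : DifferentiableAt ℝ f p) (hg : DifferentiableAt ℝ g p) (i : Fin 3) :
    pdx i (fun y => f y * g y) p = f p * pdx i g p + g p * pdx i f p := by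
  simp only [pdx]
  rw [fderiv_fun_mul (differentiableAt_slice hf) (differentiableAt_slice hg)]
  rfl

theorem pdx_comp {h : ℝ → ℝ} {h' : ℝ} (hh : HasDerivAt h h' (f p))
    (hf : DifferentiableAt ℝ f p) (i : Fin 3) :
    pdx i (fun y => h (f y)) p = h' * pdx i f p := by
  have hcomp := (hh.comp_hasFDerivAt p.1 (differentiableAt_slice hf).hasFDerivAt).fderiv
  rw [Function.comp_def] at hcomp
  rw [pdx, pdx, hcomp]
  rfl

theorem contDiffOn_pdx {S : Set P3} {n : WithTop ℕ∞} (hS : IsOpen S)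
    (hf : ContDiffOn ℝ (n + 1) f S) (i : Fin 3) : ContDiffOn ℝ n (pdx i f) S := by
  have hfd : ContDiffOn ℝ n (fun y => fderiv ℝ f y (Pi.single i 1, 0)) S :=
    (hf.fderiv_of_isOpen hS le_rfl).clm_apply contDiffOn_const
  refine hfd.congr fun y hy => pdx_eq_fderiv ?_ i
  exact (hf.contDiffAt (hS.mem_nhds hy)).differentiableAt (by simp)

theorem pdt_sub_div (hf : DifferentiableAt ℝ f p) (hg : DifferentiableAt ℝ g p) (c : ℝ) :
    pdt (fun y => (f y - g y) / c) p = (pdt f p - pdt g p) / c := by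
  simp only [pdt]
  rw [deriv_div_const, deriv_fun_sub (differentiableAt_timeSlice hf)
    (differentiableAt_timeSlice hg)]

end SpatialCalculus

theorem sq_mul_pdx_eq_of_polar {S : Set P3} (hS : IsOpen S) {r a x y : P3 → ℝ} {p : P3}
    (hx : Set.EqOn x (fun z => r z * cos (a z)) S) (hy : Set.EqOn y (fun z => r z * sin (a z)) S)
    (hr : DifferentiableAt ℝ r p) (ha : DifferentiableAt ℝ a p) (hp : p ∈ S) (i : Fin 3) :
    r p ^ 2 * pdx i a p = x p * pdx i y p - y p * pdx i x p := by
  rw [pdx_congr hS hx hp, pdx_congr hS hy hp, hx hp, hy hp, pdx_mul hr ha.sin, pdx_mul hr ha.cos,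
    pdx_comp (hasDerivAt_sin _) ha, pdx_comp (hasDerivAt_cos _) ha]
  linear_combination (-(r p ^ 2 * pdx i a p)) * sin_sq_add_cos_sq (a p)

theorem divx_congr {S : Set P3} (hS : IsOpen S) {v w : P3 → Fin 3 → ℝ} {p : P3}
    (hvw : ∀ y ∈ S, v y = w y) (hp : p ∈ S) : divx v p = divx w p :=
  Finset.sum_congr rfl fun i _ => pdx_congr hS (fun y hy => congrFun (hvw y hy) i) hp i

theorem divx_const_mul_wronskian {S : Set P3} (hS : IsOpen S) {f g : P3 → ℝ} {p : P3}
    (hf : ContDiffOn ℝ 2 f S) (hg : ContDiffOn ℝ 2 g S) (hp : p ∈ S) (c : ℝ) :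
    divx (fun y i => c * (f y * pdx i g y - g y * pdx i f y)) p
      = c * (f p * lapx g p - g p * lapx f p) := by
  have hdiff : ∀ {h : P3 → ℝ}, ContDiffOn ℝ 1 h S → DifferentiableAt ℝ h p := fun hh =>
    (hh.contDiffAt (hS.mem_nhds hp)).differentiableAt one_ne_zero
  have hf₁ := hdiff (hf.of_le one_le_two)
  have hg₁ := hdiff (hg.of_le one_le_two)
  have hf₂ := fun i => hdiff (contDiffOn_pdx hS hf i)
  have hg₂ := fun i => hdiff (contDiffOn_pdx hS hg i)
  simp only [divx, lapx, Finset.mul_sum, ← Finset.sum_sub_distrib]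
  refine Finset.sum_congr rfl fun i _ => ?_
  rw [pdx_const_mul c ((hf₁.fun_mul (hg₂ i)).fun_sub (hg₁.fun_mul (hf₂ i))),
    pdx_sub (hf₁.fun_mul (hg₂ i)) (hg₁.fun_mul (hf₂ i)), pdx_mul hf₁ (hg₂ i), pdx_mul hg₁ (hf₂ i)]
  ring

section HalfAngle

variable {ρ ρ₁ ρ₂ η : ℝ}

theorem sqrt_eq_sqrt_mul_cos_half (hη : η ∈ Set.Icc 0 π) (h₁ : ρ₁ = ρ * cos (η / 2) ^ 2) :
    √ρ₁ = √ρ * cos (η / 2) := by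
  have hc : 0 ≤ cos (η / 2) :=
    cos_nonneg_of_mem_Icc ⟨by linarith [hη.1, pi_pos], by linarith [hη.2]⟩
  rw [h₁, sqrt_mul' _ (sq_nonneg _), sqrt_sq hc]

theorem sqrt_eq_sqrt_mul_sin_half (hη : η ∈ Set.Icc 0 π) (h₂ : ρ₂ = ρ * sin (η / 2) ^ 2) :
    √ρ₂ = √ρ * sin (η / 2) := by
  have hs : 0 ≤ sin (η / 2) :=
    sin_nonneg_of_nonneg_of_le_pi (by linarith [hη.1]) (by linarith [hη.2, pi_pos])
  rw [h₂, sqrt_mul' _ (sq_nonneg _), sqrt_sq hs]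

theorem cos_eq_div_of_half_angle (hρ : ρ ≠ 0) (h₁ : ρ₁ = ρ * cos (η / 2) ^ 2)
    (h₂ : ρ₂ = ρ * sin (η / 2) ^ 2) : cos η = (ρ₁ - ρ₂) / ρ := by
  rw [eq_div_iff hρ, h₁, h₂, ← mul_sub, ← cos_two_mul', mul_div_cancel₀ η two_ne_zero, mul_comm]

theorem sin_eq_div_of_half_angle (hρ : 0 < ρ) (hη : η ∈ Set.Icc 0 π)
    (h₁ : ρ₁ = ρ * cos (η / 2) ^ 2) (h₂ : ρ₂ = ρ * sin (η / 2) ^ 2) :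
    sin η = 2 * (√ρ₁ * √ρ₂) / ρ := by
  have hsin : sin η = 2 * sin (η / 2) * cos (η / 2) := by
    rw [← sin_two_mul, mul_div_cancel₀ η two_ne_zero]
  rw [eq_div_iff hρ.ne', sqrt_eq_sqrt_mul_cos_half hη h₁, sqrt_eq_sqrt_mul_sin_half hη h₂, hsin]
  linear_combination (-(2 * sin (η / 2) * cos (η / 2))) * sq_sqrt hρ.le

end HalfAngle

theorem divx_mul_pdx_eq_wronskian {S : Set P3} (hS : IsOpen S) {ρ₁ ρ₂ ρ η : P3 → ℝ} {p : P3}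
    (hρ₁ : ContDiffOn ℝ 2 ρ₁ S) (hρ₂ : ContDiffOn ℝ 2 ρ₂ S)
    (hρ₁pos : ∀ y ∈ S, 0 < ρ₁ y) (hρ₂pos : ∀ y ∈ S, 0 < ρ₂ y)
    (hρ : DifferentiableOn ℝ ρ S) (hη : DifferentiableOn ℝ η S)
    (hηval : ∀ y ∈ S, η y ∈ Set.Ioo 0 π)
    (hη₁ : ∀ y ∈ S, ρ₁ y = ρ y * cos (η y / 2) ^ 2)
    (hη₂ : ∀ y ∈ S, ρ₂ y = ρ y * sin (η y / 2) ^ 2) (hp : p ∈ S) :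
    divx (fun y i => ρ y * pdx i η y) p
      = 2 * (√(ρ₁ p) * lapx (fun y => √(ρ₂ y)) p - √(ρ₂ p) * lapx (fun y => √(ρ₁ y)) p) := by
  have hρpos : ∀ y ∈ S, 0 < ρ y := fun y hy =>
    pos_of_mul_pos_left ((hη₁ y hy).symm ▸ hρ₁pos y hy) (sq_nonneg _)
  have hpolar₁ : Set.EqOn (fun y => √(ρ₁ y)) (fun y => √(ρ y) * cos (η y / 2)) S := fun y hy =>
    sqrt_eq_sqrt_mul_cos_half (Set.Ioo_subset_Icc_self (hηval y hy)) (hη₁ y hy)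
  have hpolar₂ : Set.EqOn (fun y => √(ρ₂ y)) (fun y => √(ρ y) * sin (η y / 2)) S := fun y hy =>
    sqrt_eq_sqrt_mul_sin_half (Set.Ioo_subset_Icc_self (hηval y hy)) (hη₂ y hy)
  have hflux : ∀ y ∈ S, (fun i => ρ y * pdx i η y) = fun i =>
      2 * (√(ρ₁ y) * pdx i (fun y => √(ρ₂ y)) y - √(ρ₂ y) * pdx i (fun y => √(ρ₁ y)) y) := by
    intro y hy
    ext i
    have hηy := hη.differentiableAt (hS.mem_nhds hy)
    have hsqrtρ := (hρ.differentiableAt (hS.mem_nhds hy)).sqrt (hρpos y hy).ne'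
    rw [← sq_mul_pdx_eq_of_polar hS hpolar₁ hpolar₂ hsqrtρ (by fun_prop) hy,
      pdx_div_const hηy, sq_sqrt (hρpos y hy).le]
    ring
  rw [divx_congr hS hflux hp, divx_const_mul_wronskian hS (hρ₁.sqrt fun y hy => (hρ₁pos y hy).ne')
    (hρ₂.sqrt fun y hy => (hρ₂pos y hy).ne') hp]

theorem sum_mean_sub_mul_sub_div {ι : Type*} [Fintype ι] {w₁ w₂ m ħ : ℝ} (q : ℝ)
    (a b A : ι → ℝ) (hw : w₁ + w₂ ≠ 0) (hm : m ≠ 0) (hħ : ħ ≠ 0) :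
    ∑ i, ((w₁ * a i + w₂ * b i) / (m * (w₁ + w₂)) - q / m * A i) * ((b i - a i) / ħ)
      = ((∑ i, (b i - q * A i) ^ 2) - ∑ i, (a i - q * A i) ^ 2) / (2 * m * ħ)
        - ħ / (2 * m) * ((w₁ - w₂) / (w₁ + w₂)) * ∑ i, ((b i - a i) / ħ) ^ 2 := by
  rw [← Finset.sum_sub_distrib, Finset.sum_div, Finset.mul_sum, ← Finset.sum_sub_distrib]
  refine Finset.sum_congr rfl fun i _ => ?_
  field_simp
  ring

theorem phi_evolution_general
    (Ω : Set (Fin 3 → ℝ)) (hΩ : IsOpen Ω)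
    (ρ₁ ρ₂ θ₁ θ₂ : P3 → ℝ) (A : P3 → Fin 3 → ℝ) (Φ B1 B2 B3 : P3 → ℝ)
    (m hbar q : ℝ) (hm : 0 < m) (hhbar : 0 < hbar)
    (hρ₁s : ContDiffOn ℝ (⊤ : ℕ∞) ρ₁ (Ω ×ˢ Set.univ))
    (hρ₂s : ContDiffOn ℝ (⊤ : ℕ∞) ρ₂ (Ω ×ˢ Set.univ))
    (hθ₁s : ContDiffOn ℝ (⊤ : ℕ∞) θ₁ (Ω ×ˢ Set.univ))
    (hθ₂s : ContDiffOn ℝ (⊤ : ℕ∞) θ₂ (Ω ×ˢ Set.univ))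
    (hρ₁pos : ∀ p ∈ Ω ×ˢ (Set.univ : Set ℝ), 0 < ρ₁ p)
    (hρ₂pos : ∀ p ∈ Ω ×ˢ (Set.univ : Set ℝ), 0 < ρ₂ p)
    (φ : P3 → ℝ) (hφ : φ = fun p => (θ₂ p - θ₁ p) / hbar)
    (ρ : P3 → ℝ) (hρ : ρ = fun p => ρ₁ p + ρ₂ p)
    (u : P3 → Fin 3 → ℝ)
    (hu : u = fun p i =>
      (ρ₁ p * pdx i θ₁ p + ρ₂ p * pdx i θ₂ p) / (m * ρ p) - q / m * A p i)
    (Vq1 Vq2 : P3 → ℝ)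
    (hVq1 : Vq1 = fun p =>
      -(hbar ^ 2 / (2 * m)) * lapx (fun y => Real.sqrt (ρ₁ y)) p / Real.sqrt (ρ₁ p))
    (hVq2 : Vq2 = fun p =>
      -(hbar ^ 2 / (2 * m)) * lapx (fun y => Real.sqrt (ρ₂ y)) p / Real.sqrt (ρ₂ p))
    (η : P3 → ℝ)
    (hηs : ContDiffOn ℝ (⊤ : ℕ∞) η (Ω ×ˢ Set.univ))
    (hηval : ∀ p ∈ Ω ×ˢ (Set.univ : Set ℝ), η p ∈ Set.Ioo 0 π)
    (hη₁ : ∀ p ∈ Ω ×ˢ (Set.univ : Set ℝ), ρ₁ p = ρ p * Real.cos (η p / 2) ^ 2)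
    (hη₂ : ∀ p ∈ Ω ×ˢ (Set.univ : Set ℝ), ρ₂ p = ρ p * Real.sin (η p / 2) ^ 2)
    (h1 : ∀ p ∈ Ω ×ˢ (Set.univ : Set ℝ),
      pdt θ₁ p = -Vq1 p - (1 / (2 * m)) * (∑ i, (pdx i θ₁ p - q * A p i) ^ 2)
        - q * Φ p
        + q * hbar / (2 * m)
          * (B3 p + Real.sqrt (ρ₂ p / ρ₁ p)
              * (B1 p * Real.cos (φ p) + B2 p * Real.sin (φ p))))
    (h2 : ∀ p ∈ Ω ×ˢ (Set.univ : Set ℝ),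
      pdt θ₂ p = -Vq2 p - (1 / (2 * m)) * (∑ i, (pdx i θ₂ p - q * A p i) ^ 2)
        - q * Φ p
        + q * hbar / (2 * m)
          * (-B3 p + Real.sqrt (ρ₁ p / ρ₂ p)
              * (B1 p * Real.cos (φ p) + B2 p * Real.sin (φ p)))) :
    ∀ p ∈ Ω ×ˢ (Set.univ : Set ℝ),
      pdt φ p + (∑ i, u p i * pdx i φ p)
        = hbar / (2 * m * ρ p * Real.sin (η p)) * divx (fun y i => ρ y * pdx i η y) p
          - hbar / (2 * m) * Real.cos (η p) * (∑ i, (pdx i φ p) ^ 2)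
          + q / m * (-B3 p + Real.cos (η p) / Real.sin (η p)
              * (B1 p * Real.cos (φ p) + B2 p * Real.sin (φ p))) := by
  intro p hp
  have hS : IsOpen (Ω ×ˢ (Set.univ : Set ℝ)) := hΩ.prod isOpen_univ
  have hdiff : ∀ {f : P3 → ℝ}, ContDiffOn ℝ (⊤ : ℕ∞) f (Ω ×ˢ Set.univ) → DifferentiableAt ℝ f p :=
    fun hf => (hf.contDiffAt (hS.mem_nhds hp)).differentiableAt (by simp)
  have hρp : ρ p = ρ₁ p + ρ₂ p := by rw [hρ]
  have hρpos : 0 < ρ p := hρp ▸ add_pos (hρ₁pos p hp) (hρ₂pos p hp)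
  have hdiv := divx_mul_pdx_eq_wronskian hS (hρ₁s.of_le (WithTop.coe_le_coe.2 le_top))
    (hρ₂s.of_le (WithTop.coe_le_coe.2 le_top)) hρ₁pos hρ₂pos
    (hρ ▸ (hρ₁s.add hρ₂s).differentiableOn (by simp)) (hηs.differentiableOn (by simp))
    hηval hη₁ hη₂ hp
  have hφt := hφ ▸ pdt_sub_div (hdiff hθ₂s) (hdiff hθ₁s) hbar
  have hφx := fun i => hφ ▸ pdx_sub_div (hdiff hθ₂s) (hdiff hθ₁s) hbar i
  rw [hφt, h1 p hp, h2 p hp, hdiv, hVq1, hVq2,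
    cos_eq_div_of_half_angle hρpos.ne' (hη₁ p hp) (hη₂ p hp),
    sin_eq_div_of_half_angle hρpos (Set.Ioo_subset_Icc_self (hηval p hp)) (hη₁ p hp) (hη₂ p hp)]
  simp only [hu, hφx]
  rw [hρp, sum_mean_sub_mul_sub_div q _ _ _ (hρp ▸ hρpos.ne') hm.ne' hhbar.ne',
    sqrt_div (hρ₁pos p hp).le, sqrt_div (hρ₂pos p hp).le]
  have e₁ : ρ₁ p = √(ρ₁ p) ^ 2 := (sq_sqrt (hρ₁pos p hp).le).symm
  have e₂ : ρ₂ p = √(ρ₂ p) ^ 2 := (sq_sqrt (hρ₂pos p hp).le).symm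
  have hR₁ : √(ρ₁ p) ≠ 0 := (sqrt_pos.2 (hρ₁pos p hp)).ne'
  have hR₂ : √(ρ₂ p) ≠ 0 := (sqrt_pos.2 (hρ₂pos p hp)).ne'
  -- in terms of `Rᵢ = √ρᵢ` the remaining identity is rational
  generalize √(ρ₁ p) = R₁ at e₁ hR₁ ⊢
  generalize √(ρ₂ p) = R₂ at e₂ hR₂ ⊢
  rw [e₁, e₂]
  field_simp
  ring

/-- **Evolution equation for the relative phase φ.**
From the real (Hamilton–Jacobi-type) parts of the Pauli equation for the polar
components `Ψᵢ = √ρᵢ e^{iθᵢ/ħ}`, the relative phase `φ = (θ₂ - θ₁)/ħ` satisfies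
`∂ₜφ + u·∇φ = (ħ/(2mρ sin η)) ∇·(ρ∇η) - (ħ/2m) cos η |∇φ|²
+ (q/m)[-B³ + cot η (B¹ cos φ + B² sin φ)]`. -/
theorem phi_evolution
    (Ω : Set (Fin 3 → ℝ)) (hΩ : IsOpen Ω)
    (ρ₁ ρ₂ θ₁ θ₂ : P3 → ℝ) (A : P3 → Fin 3 → ℝ) (Φ B1 B2 B3 : P3 → ℝ)
    (m hbar q : ℝ) (hm : 0 < m) (hhbar : 0 < hbar)
    (hρ₁s : ContDiffOn ℝ (⊤ : ℕ∞) ρ₁ (Ω ×ˢ Set.univ))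
    (hρ₂s : ContDiffOn ℝ (⊤ : ℕ∞) ρ₂ (Ω ×ˢ Set.univ))
    (hθ₁s : ContDiffOn ℝ (⊤ : ℕ∞) θ₁ (Ω ×ˢ Set.univ))
    (hθ₂s : ContDiffOn ℝ (⊤ : ℕ∞) θ₂ (Ω ×ˢ Set.univ))
    (hAs : ContDiffOn ℝ (⊤ : ℕ∞) A (Ω ×ˢ Set.univ))
    (hΦs : ContDiffOn ℝ (⊤ : ℕ∞) Φ (Ω ×ˢ Set.univ))
    (hB1s : ContDiffOn ℝ (⊤ : ℕ∞) B1 (Ω ×ˢ Set.univ))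
    (hB2s : ContDiffOn ℝ (⊤ : ℕ∞) B2 (Ω ×ˢ Set.univ))
    (hB3s : ContDiffOn ℝ (⊤ : ℕ∞) B3 (Ω ×ˢ Set.univ))
    (hρ₁pos : ∀ p ∈ Ω ×ˢ (Set.univ : Set ℝ), 0 < ρ₁ p)
    (hρ₂pos : ∀ p ∈ Ω ×ˢ (Set.univ : Set ℝ), 0 < ρ₂ p)
    (φ : P3 → ℝ) (hφ : φ = fun p => (θ₂ p - θ₁ p) / hbar)
    (ρ : P3 → ℝ) (hρ : ρ = fun p => ρ₁ p + ρ₂ p)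
    (u : P3 → Fin 3 → ℝ)
    (hu : u = fun p i =>
      (ρ₁ p * pdx i θ₁ p + ρ₂ p * pdx i θ₂ p) / (m * ρ p) - q / m * A p i)
    (Vq1 Vq2 : P3 → ℝ)
    (hVq1 : Vq1 = fun p =>
      -(hbar ^ 2 / (2 * m)) * lapx (fun y => Real.sqrt (ρ₁ y)) p / Real.sqrt (ρ₁ p))
    (hVq2 : Vq2 = fun p =>
      -(hbar ^ 2 / (2 * m)) * lapx (fun y => Real.sqrt (ρ₂ y)) p / Real.sqrt (ρ₂ p))
    (η : P3 → ℝ)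
    (hηs : ContDiffOn ℝ (⊤ : ℕ∞) η (Ω ×ˢ Set.univ))
    (hηval : ∀ p ∈ Ω ×ˢ (Set.univ : Set ℝ), η p ∈ Set.Ioo 0 π)
    (hη₁ : ∀ p ∈ Ω ×ˢ (Set.univ : Set ℝ), ρ₁ p = ρ p * Real.cos (η p / 2) ^ 2)
    (hη₂ : ∀ p ∈ Ω ×ˢ (Set.univ : Set ℝ), ρ₂ p = ρ p * Real.sin (η p / 2) ^ 2)
    (h1 : ∀ p ∈ Ω ×ˢ (Set.univ : Set ℝ),
      pdt θ₁ p = -Vq1 p - (1 / (2 * m)) * (∑ i, (pdx i θ₁ p - q * A p i) ^ 2)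
        - q * Φ p
        + q * hbar / (2 * m)
          * (B3 p + Real.sqrt (ρ₂ p / ρ₁ p)
              * (B1 p * Real.cos (φ p) + B2 p * Real.sin (φ p))))
    (h2 : ∀ p ∈ Ω ×ˢ (Set.univ : Set ℝ),
      pdt θ₂ p = -Vq2 p - (1 / (2 * m)) * (∑ i, (pdx i θ₂ p - q * A p i) ^ 2)
        - q * Φ p
        + q * hbar / (2 * m)
          * (-B3 p + Real.sqrt (ρ₁ p / ρ₂ p)
              * (B1 p * Real.cos (φ p) + B2 p * Real.sin (φ p)))) :
    ∀ p ∈ Ω ×ˢ (Set.univ : Set ℝ),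
      pdt φ p + (∑ i, u p i * pdx i φ p)
        = hbar / (2 * m * ρ p * Real.sin (η p)) * divx (fun y i => ρ y * pdx i η y) p
          - hbar / (2 * m) * Real.cos (η p) * (∑ i, (pdx i φ p) ^ 2)
          + q / m * (-B3 p + Real.cos (η p) / Real.sin (η p)
              * (B1 p * Real.cos (φ p) + B2 p * Real.sin (φ p))) :=
  phi_evolution_general Ω hΩ ρ₁ ρ₂ θ₁ θ₂ A Φ B1 B2 B3 m hbar q hm hhbar hρ₁s hρ₂s hθ₁s hθ₂s hρ₁pos
    hρ₂pos φ hφ ρ hρ u hu Vq1 Vq2 hVq1 hVq2 η hηs hηval hη₁ hη₂ h1 h2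

end
end
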